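/- Let {G_n} be a weakly convergent sequence of finite connected graphs with degree bound d and |V(G_n)| → ∞, and let {A_n} be a weakly convergent operator sequence (uniformly bounded kernels of uniformly bounded range that are pattern-invariant with respect to balls of radius s). Then the limit tr({A_n}) := lim_{n→∞} (1/|V(G_n)|) Σ_{x∈V(G_n)} A_n(x,x) exists, and equals Σ_α (lim_n p_{G_n}(α)) · f^A_α(root), where the sum is over rooted isomorphism classes α of s-balls with nonvanishing limiting frequency and f^A_α is the invariant function giving the diagonal kernel value at the root for pattern α. -/

import Mathlib

open scoped Classical

noncomputable section

namespace GraphPaper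

open Filter

variable {V W : Type*}

/-- The star of a vertex `y` in `G`: the subgraph consisting of `y`, its neighbours and the
edges from `y` to its neighbours (realized as a graph on the full vertex set). -/
def graphStar (G : SimpleGraph V) (y : V) : SimpleGraph V where
  Adj a b := G.Adj a b ∧ (a = y ∨ b = y)
  symm := ⟨fun a b h => ⟨h.1.symm, h.2.symm⟩⟩
  loopless := ⟨fun a h => G.loopless.irrefl a h.1⟩

/-- Rooted isomorphism of graphs with distinguished roots. -/
def rootedIso (G : SimpleGraph V) (y : V) (H : SimpleGraph W) (z : W) : Prop :=
  ∃ e : V ≃ W, e y = z ∧ ∀ a b : V, G.Adj a b ↔ H.Adj (e a) (e b)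

/-- δ(G,H): proportion of vertices whose stars differ up to rooted isomorphism. -/
def starDelta [Fintype V] (G H : SimpleGraph V) : ℝ :=
  (Nat.card {y : V | ¬ rootedIso (graphStar G y) y (graphStar H y) y} : ℝ) /
    (Fintype.card V : ℝ)

/-- `H^σ`, the graph with edges `(σ x, σ y)` for `(x,y) ∈ E(H)`. -/
def permGraph (H : SimpleGraph V) (σ : Equiv.Perm V) : SimpleGraph V :=
  SimpleGraph.comap (σ.symm : V → V) H

/-- δ_s(G,H) = min over permutations σ of δ(G,H^σ). -/
def deltaS [Fintype V] (G H : SimpleGraph V) : ℝ :=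
  ⨅ σ : Equiv.Perm V, starDelta G (permGraph H σ)

/-- The disjoint union of `q` copies of `G`. -/
def copies (q : ℕ) (G : SimpleGraph V) : SimpleGraph (Fin q × V) where
  Adj a b := a.1 = b.1 ∧ G.Adj a.2 b.2
  symm := ⟨fun a b h => ⟨h.1.symm, h.2.symm⟩⟩
  loopless := ⟨fun a h => G.loopless.irrefl a.2 h.2⟩

/-- The geometric distance δ_ρ(G,H) = inf { δ_s(qG, rH) : q|V(G)| = r|V(H)| }, where the
two disjoint unions are represented on a common vertex set via an equivalence. -/
def deltaRho [Fintype V] [Fintype W] (G : SimpleGraph V) (H : SimpleGraph W) : ℝ :=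
  sInf { x : ℝ | ∃ q r : ℕ, 0 < q ∧ 0 < r ∧ q * Fintype.card V = r * Fintype.card W ∧
    x = ⨅ e : (Fin q × V) ≃ (Fin r × W),
      starDelta (copies q G) (SimpleGraph.comap (e : Fin q × V → Fin r × W) (copies r H)) }

/-- Vertex degree bound `d`. -/
def degBound (G : SimpleGraph V) (d : ℕ) : Prop := ∀ v : V, (G.neighborSet v).ncard ≤ d

/-- The ball of radius `r` around `x` in the shortest path metric. -/
def ballSet (G : SimpleGraph V) (x : V) (r : ℕ) : Set V :=
  {v | G.Reachable x v ∧ G.dist x v ≤ r}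

theorem root_mem (G : SimpleGraph V) (x : V) (r : ℕ) : x ∈ ballSet G x r :=
  ⟨SimpleGraph.Reachable.refl x, by simp [SimpleGraph.dist_self]⟩

/-- `B_r(x)` (rooted at `x`) represents the rooted pattern `(H, y)`. -/
def ballRep (G : SimpleGraph V) (x : V) (r : ℕ) (H : SimpleGraph W) (y : W) : Prop :=
  ∃ f : ballSet G x r ≃ W, f ⟨x, root_mem G x r⟩ = y ∧
    ∀ a b : ballSet G x r, G.Adj (a : V) (b : V) ↔ H.Adj (f a) (f b)

/-- `p_G(α)`: the frequency of vertices whose rooted `r`-ball represents the pattern `(H,y)`. -/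
def patternFreq [Fintype V] (G : SimpleGraph V) (r : ℕ) (H : SimpleGraph W) (y : W) : ℝ :=
  (Nat.card {x : V | ballRep G x r H y} : ℝ) / (Fintype.card V : ℝ)

/-- All connected components of `G` have at most `K` vertices. -/
def smallComps (G : SimpleGraph V) (K : ℕ) : Prop :=
  ∀ x : V, Nat.card {y : V | G.Reachable x y} ≤ K

/-- The subgraph induced on a set `s` (kept on the full vertex set). -/
def inducedOn (G : SimpleGraph V) (s : Set V) : SimpleGraph V where
  Adj a b := G.Adj a b ∧ a ∈ s ∧ b ∈ s
  symm := ⟨fun a b h => ⟨h.1.symm, h.2.2, h.2.1⟩⟩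
  loopless := ⟨fun a h => G.loopless.irrefl a h.1⟩

/-- The (inner) boundary of `s` in `G`. -/
def gBoundary (G : SimpleGraph V) (s : Set V) : Set V :=
  {x | x ∈ s ∧ ∃ y, y ∉ s ∧ G.Adj x y}

/-- The `s`-ball of `x` is the same (as a labeled subgraph) in `G₁` and `G₂`. -/
def sBallMatch (G₁ G₂ : SimpleGraph V) (s : ℕ) (x : V) : Prop :=
  ballSet G₁ x s = ballSet G₂ x s ∧
  ∀ a b : V, a ∈ ballSet G₁ x s → b ∈ ballSet G₁ x s → (G₁.Adj a b ↔ G₂.Adj a b)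

/-- The number of eigenvalues (roots of the characteristic polynomial, with multiplicity)
of `M` that are at most `lam`. -/
def specCount {ι : Type*} [Fintype ι] [DecidableEq ι] (M : Matrix ι ι ℝ) (lam : ℝ) : ℝ :=
  ((M.charpoly.roots.filter (fun x => x ≤ lam)).card : ℝ)

/-- The compression `p_n Δ i_n` of the Laplacian of `G` to a finite set `s`. -/
def lapCompress [DecidableEq V] (G : SimpleGraph V) (s : Finset V) : Matrix s s ℝ :=
  Matrix.of fun x y : s =>
    (if (x : V) = (y : V) then ((G.neighborSet (x : V)).ncard : ℝ) else 0) -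
      (if G.Adj (x : V) (y : V) then 1 else 0)

/-- The intrinsic Laplacian of the subgraph induced on a finite set `s`. -/
def lapInduced [DecidableEq V] (G : SimpleGraph V) (s : Finset V) : Matrix s s ℝ :=
  Matrix.of fun x y : s =>
    (if (x : V) = (y : V) then ((G.neighborSet (x : V) ∩ (s : Set V)).ncard : ℝ) else 0) -
      (if G.Adj (x : V) (y : V) then 1 else 0)

/-!
Balls of radius `s` in graphs of degree at most `d` have at most `(d + 1) ^ s` vertices, so they
fall into finitely many rooted isomorphism classes. Splitting the normalized trace along these
classes, a class of nonzero limiting frequency contributes its frequency times the diagonal value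
that pattern invariance attaches to it, while a class of vanishing frequency contributes at most
`m` times its frequency. Splitting along any other complete system of representatives gives the
same limit, hence the formula.
-/

open Topology

lemma rootedIso_refl (G : SimpleGraph V) (y : V) : rootedIso G y G y :=
  ⟨Equiv.refl V, rfl, fun _ _ => Iff.rfl⟩

lemma rootedIso_symm {G : SimpleGraph V} {y : V} {H : SimpleGraph W} {z : W}
    (h : rootedIso G y H z) : rootedIso H z G y := by
  obtain ⟨e, he, hadj⟩ := h
  exact ⟨e.symm, by simp [← he], fun a b => by simpa using (hadj (e.symm a) (e.symm b)).symm⟩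

lemma rootedIso_trans {U : Type*} {G : SimpleGraph V} {y : V} {H : SimpleGraph W} {z : W}
    {K : SimpleGraph U} {w : U} (h₁ : rootedIso G y H z) (h₂ : rootedIso H z K w) :
    rootedIso G y K w := by
  obtain ⟨e₁, he₁, hadj₁⟩ := h₁
  obtain ⟨e₂, he₂, hadj₂⟩ := h₂
  exact ⟨e₁.trans e₂, by simp [he₁, he₂], fun a b => (hadj₁ a b).trans (hadj₂ _ _)⟩

section BallRep

variable {U : Type*} {G : SimpleGraph V} {x : V} {r : ℕ} {H : SimpleGraph W} {y : W}
  {K : SimpleGraph U} {z : U}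

lemma ballRep_self (G : SimpleGraph V) (x : V) (r : ℕ) :
    ballRep G x r (G.induce (ballSet G x r)) ⟨x, root_mem G x r⟩ :=
  ⟨Equiv.refl _, rfl, fun _ _ => Iff.rfl⟩

lemma ballRep.congr (h : ballRep G x r H y) (hiso : rootedIso H y K z) : ballRep G x r K z := by
  obtain ⟨f, hf, hadj⟩ := h
  obtain ⟨e, he, hadj'⟩ := hiso
  exact ⟨f.trans e, by simp [hf, he], fun a b => (hadj a b).trans (hadj' _ _)⟩

lemma rootedIso_of_ballRep (h₁ : ballRep G x r H y) (h₂ : ballRep G x r K z) :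
    rootedIso H y K z := by
  obtain ⟨f₁, hf₁, hadj₁⟩ := h₁
  obtain ⟨f₂, hf₂, hadj₂⟩ := h₂
  refine ⟨f₁.symm.trans f₂, by simp [← hf₁, hf₂], fun a b => ?_⟩
  simpa using (hadj₁ (f₁.symm a) (f₁.symm b)).symm.trans (hadj₂ (f₁.symm a) (f₁.symm b))

lemma patternFreq_congr [Fintype V] (G : SimpleGraph V) (r : ℕ) (hiso : rootedIso H y K z) :
    patternFreq G r H y = patternFreq G r K z := by
  have hsets : {x | ballRep G x r H y} = {x | ballRep G x r K z} :=
    Set.ext fun _ => ⟨fun h => h.congr hiso, fun h => h.congr (rootedIso_symm hiso)⟩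
  rw [patternFreq, patternFreq, hsets]

lemma patternFreq_eq_card_filter [Fintype V] (G : SimpleGraph V) (r : ℕ) (H : SimpleGraph W)
    (y : W) : patternFreq G r H y =
      ((Finset.univ.filter fun x => ballRep G x r H y).card : ℝ) / Fintype.card V := by
  rw [patternFreq, Nat.card_coe_set_eq, Set.ncard_eq_toFinset_card', Set.toFinset_ofPred]

lemma exists_ballRep_of_patternFreq_ne_zero [Fintype V] (h : patternFreq G r H y ≠ 0) :
    ∃ x, ballRep G x r H y := by
  by_contra! hnone
  simp [patternFreq, hnone] at h

end BallRep

section Balls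

variable {G : SimpleGraph V} {x v : V} {r : ℕ}

lemma mem_ballSet_iff : v ∈ ballSet G x r ↔ ∃ p : G.Walk x v, p.length ≤ r := by
  refine ⟨fun ⟨hreach, hdist⟩ => ?_, fun ⟨p, hp⟩ => ⟨p.reachable, (G.dist_le p).trans hp⟩⟩
  obtain ⟨p, hp⟩ := hreach.exists_walk_length_eq_dist
  exact ⟨p, hp ▸ hdist⟩

lemma ballSet_zero (G : SimpleGraph V) (x : V) : ballSet G x 0 = {x} := by
  ext v
  simp only [mem_ballSet_iff, Nat.le_zero, Set.mem_singleton_iff]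
  constructor
  · rintro ⟨p, hp⟩
    exact (p.eq_of_length_eq_zero hp).symm
  · rintro rfl
    exact ⟨.nil, rfl⟩

lemma ballSet_succ_subset (G : SimpleGraph V) (x : V) (r : ℕ) :
    ballSet G x (r + 1) ⊆ ballSet G x r ∪ ⋃ u ∈ ballSet G x r, G.neighborSet u := by
  intro v hv
  obtain ⟨p, hp⟩ := mem_ballSet_iff.mp hv
  cases hrev : p.reverse with
  | nil => exact Or.inl (mem_ballSet_iff.mpr ⟨.nil, Nat.zero_le _⟩)
  | @cons _ u _ hadj q =>
    have hlen : q.length + 1 ≤ r + 1 := by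
      simpa [← SimpleGraph.Walk.length_reverse p, hrev] using hp
    exact Or.inr (Set.mem_biUnion (mem_ballSet_iff.mpr ⟨q.reverse, by simpa using hlen⟩)
      hadj.symm)

lemma ncard_ballSet_le [Finite V] {d : ℕ} (hd : degBound G d) (x : V) (r : ℕ) :
    (ballSet G x r).ncard ≤ (d + 1) ^ r := by
  induction r with
  | zero => simp [ballSet_zero]
  | succ r ih =>
    set B := (ballSet G x r).toFinite.toFinset
    have hnbr : (⋃ u ∈ B, G.neighborSet u).ncard ≤ (d + 1) ^ r * d := calc
      _ ≤ ∑ u ∈ B, (G.neighborSet u).ncard := B.set_ncard_biUnion_le _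
      _ ≤ B.card * d := by simpa using Finset.sum_le_card_nsmul B _ d fun u _ => hd u
      _ ≤ (d + 1) ^ r * d := by
        rw [← Set.ncard_eq_toFinset_card]
        exact Nat.mul_le_mul_right d ih
    calc (ballSet G x (r + 1)).ncard
        ≤ (ballSet G x r ∪ ⋃ u ∈ B, G.neighborSet u).ncard :=
          Set.ncard_le_ncard (by simpa [B] using ballSet_succ_subset G x r)
      _ ≤ (ballSet G x r).ncard + (⋃ u ∈ B, G.neighborSet u).ncard := Set.ncard_union_le _ _
      _ ≤ (d + 1) ^ r + (d + 1) ^ r * d := add_le_add ih hnbr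
      _ = (d + 1) ^ (r + 1) := by ring

lemma ballRep_zero_iff {H : SimpleGraph W} {y : W} : ballRep G x 0 H y ↔ ∀ w, w = y := by
  have hball : ∀ a : ballSet G x 0, (a : V) = x := fun a => by
    simpa [ballSet_zero] using a.2
  constructor
  · rintro ⟨f, hf, -⟩ w
    rw [← f.apply_symm_apply w, ← hf]
    exact congrArg f (Subtype.ext (hball _))
  · intro hW
    refine ⟨⟨fun _ => y, fun _ => ⟨x, root_mem G x 0⟩, fun a => Subtype.ext (hball a).symm,
      fun w => (hW w).symm⟩, rfl, fun a b => ?_⟩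
    simp [hball a, hball b]

lemma patternFreq_radius_zero [Fintype V] [Nonempty V] (G : SimpleGraph V) (H : SimpleGraph W)
    (y : W) : patternFreq G 0 H y = if ∀ w, w = y then 1 else 0 := by
  split_ifs with hW <;> simp [patternFreq, ballRep_zero_iff, hW]

end Balls

abbrev SmallRootedGraph (D : ℕ) := Σ k : Fin (D + 1), SimpleGraph (Fin k) × Fin k

def SmallRootedGraph.setoid (D : ℕ) : Setoid (SmallRootedGraph D) where
  r a b := rootedIso a.2.1 a.2.2 b.2.1 b.2.2
  iseqv := ⟨fun _ => rootedIso_refl _ _, rootedIso_symm, rootedIso_trans⟩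

abbrev PatternClass (D : ℕ) := Quotient (SmallRootedGraph.setoid D)

lemma exists_smallRootedGraph_ballRep [Fintype V] (G : SimpleGraph V) (x : V) (r : ℕ) {D : ℕ}
    (hD : (ballSet G x r).ncard ≤ D) : ∃ j : SmallRootedGraph D, ballRep G x r j.2.1 j.2.2 := by
  have hcard : Fintype.card (ballSet G x r) < D + 1 := by
    rw [← Nat.card_eq_fintype_card, Nat.card_coe_set_eq]
    exact Nat.lt_succ_of_le hD
  let e := Fintype.equivFin (ballSet G x r)
  exact ⟨⟨⟨_, hcard⟩, (G.induce (ballSet G x r)).comap e.symm, e ⟨x, root_mem G x r⟩⟩,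
    e, rfl, fun a b => by simp⟩

lemma existsUnique_patternClass_ballRep [Fintype V] (G : SimpleGraph V) (x : V) (r : ℕ)
    {D : ℕ} (hD : (ballSet G x r).ncard ≤ D) :
    ∃! q : PatternClass D, ballRep G x r q.out.2.1 q.out.2.2 := by
  obtain ⟨j, hj⟩ := exists_smallRootedGraph_ballRep G x r hD
  have hrep : ballRep G x r (⟦j⟧ : PatternClass D).out.2.1 (⟦j⟧ : PatternClass D).out.2.2 :=
    hj.congr (rootedIso_symm (Quotient.mk_out (s := SmallRootedGraph.setoid D) j))
  exact ⟨⟦j⟧, hrep, fun q hq => Quotient.out_equiv_out.mp (rootedIso_of_ballRep hq hrep)⟩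

lemma sum_eq_sum_sum_filter_of_existsUnique {α I M : Type*} [Fintype α] [Fintype I]
    [AddCommMonoid M] {R : I → α → Prop} (hR : ∀ x, ∃! i, R i x) (f : α → M) :
    ∑ x, f x = ∑ i, ∑ x ∈ Finset.univ.filter (R i), f x := by
  choose g hg hg_unique using hR
  have hfiber : ∀ i, Finset.univ.filter (R i) = Finset.univ.filter (g · = i) := fun i =>
    Finset.filter_congr fun x _ => ⟨fun h => (hg_unique x i h).symm, fun h => h ▸ hg x⟩
  simp_rw [hfiber]
  exact (Finset.sum_fiberwise Finset.univ g f).symm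

theorem tendsto_sum_div_card_of_classes {V : ℕ → Type*} [∀ n, Fintype (V n)] {I : Type*}
    [Fintype I] {R : ∀ n, I → V n → Prop} (hR : ∀ n x, ∃! i, R n i x) {p : I → ℝ}
    (hp : ∀ i, Tendsto (fun n => ((Finset.univ.filter (R n i)).card : ℝ) / Fintype.card (V n))
      atTop (𝓝 (p i)))
    {f : ∀ n, V n → ℝ} {m : ℝ} (hf : ∀ n x, |f n x| ≤ m) {c : I → ℝ}
    (hc : ∀ i, p i ≠ 0 → ∀ n x, R n i x → f n x = c i) :
    Tendsto (fun n => (∑ x, f n x) / Fintype.card (V n)) atTop (𝓝 (∑ i, p i * c i)) := by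
  have hsplit : ∀ n, (∑ x, f n x) / Fintype.card (V n) =
      ∑ i, (∑ x ∈ Finset.univ.filter (R n i), f n x) / Fintype.card (V n) := fun n => by
    rw [sum_eq_sum_sum_filter_of_existsUnique (hR n), Finset.sum_div]
  simp only [hsplit]
  refine tendsto_finsetSum _ fun i _ => ?_
  by_cases hpi : p i = 0
  · rw [hpi, zero_mul]
    refine squeeze_zero_norm (fun n => ?_) (by simpa [hpi] using (hp i).mul_const m)
    rw [Real.norm_eq_abs, abs_div, Nat.abs_cast, div_mul_eq_mul_div]
    gcongr
    calc |∑ x ∈ Finset.univ.filter (R n i), f n x|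
        ≤ ∑ x ∈ Finset.univ.filter (R n i), |f n x| := Finset.abs_sum_le_sum_abs _ _
      _ ≤ (Finset.univ.filter (R n i)).card * m := by
        simpa using Finset.sum_le_card_nsmul _ _ m fun x _ => hf n x
  · have hterm : ∀ n, (∑ x ∈ Finset.univ.filter (R n i), f n x) / Fintype.card (V n) =
        ((Finset.univ.filter (R n i)).card : ℝ) / Fintype.card (V n) * c i := fun n => by
      rw [Finset.sum_congr rfl fun x hx => hc i hpi n x (Finset.mem_filter.mp hx).2,
        Finset.sum_const, nsmul_eq_mul, div_mul_eq_mul_div]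
    simpa only [hterm] using (hp i).mul_const (c i)

section Sequences

variable {V : ℕ → Type} [∀ n, Fintype (V n)] (G : ∀ n, SimpleGraph (V n)) (s : ℕ)
  (A : ∀ n, V n → V n → ℝ)

/-- The pattern invariance in the definition of a weakly convergent operator sequence. -/
def IsPatternInvariant : Prop :=
  ∀ k (x : V k),
    ¬ Tendsto (fun n => patternFreq (G n) s (SimpleGraph.induce (ballSet (G k) x s) (G k))
      ⟨x, root_mem (G k) x s⟩) atTop (𝓝 0) →
    ∀ l (z : V l) (f : ballSet (G l) z s ≃ ballSet (G k) x s),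
      f ⟨z, root_mem (G l) z s⟩ = ⟨x, root_mem (G k) x s⟩ →
      (∀ a b : ballSet (G l) z s,
        (G l).Adj (a : V l) (b : V l) ↔ (G k).Adj (f a : V k) (f b : V k)) →
      ∀ a : ballSet (G l) z s, A l z (a : V l) = A k x (f a : V k)

variable {G s A}

lemma IsPatternInvariant.exists_diag_eq (hA : IsPatternInvariant G s A) {W : Type*}
    {P : SimpleGraph W} {y : W} {p : ℝ}
    (hp : Tendsto (fun n => patternFreq (G n) s P y) atTop (𝓝 p)) (hp0 : p ≠ 0) :
    ∃ c, ∀ n x, ballRep (G n) x s P y → A n x x = c := by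
  obtain ⟨n₀, hn₀⟩ := (hp.eventually_ne hp0).exists
  obtain ⟨x₀, hx₀⟩ := exists_ballRep_of_patternFreq_ne_zero hn₀
  have hiso := rootedIso_of_ballRep (ballRep_self (G n₀) x₀ s) hx₀
  have hfreq : ¬ Tendsto (fun n => patternFreq (G n) s
      ((G n₀).induce (ballSet (G n₀) x₀ s)) ⟨x₀, root_mem (G n₀) x₀ s⟩) atTop (𝓝 0) := by
    simp_rw [patternFreq_congr _ s hiso]
    exact fun h0 => hp0 (tendsto_nhds_unique hp h0)
  refine ⟨A n₀ x₀ x₀, fun n x hx => ?_⟩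
  obtain ⟨f, hf_root, hf_adj⟩ := hx.congr (rootedIso_symm hiso)
  simpa [hf_root] using hA n₀ x₀ hfreq n x f hf_root hf_adj ⟨x, root_mem (G n) x s⟩

lemma tendsto_trace_of_patterns {m : ℝ} (hA : ∀ n x, |A n x x| ≤ m) {I : Type*} [Fintype I]
    {W : I → Type*} (P : ∀ i, SimpleGraph (W i)) (y : ∀ i, W i) {p c : I → ℝ}
    (hP : ∀ n (x : V n), ∃! i, ballRep (G n) x s (P i) (y i))
    (hp : ∀ i, Tendsto (fun n => patternFreq (G n) s (P i) (y i)) atTop (𝓝 (p i)))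
    (hc : ∀ i, p i ≠ 0 → ∀ n (x : V n), ballRep (G n) x s (P i) (y i) → A n x x = c i) :
    Tendsto (fun n => (∑ x, A n x x) / Fintype.card (V n)) atTop (𝓝 (∑ i, p i * c i)) :=
  tendsto_sum_div_card_of_classes (R := fun n i x => ballRep (G n) x s (P i) (y i)) hP
    (by simpa only [patternFreq_eq_card_filter] using hp) hA hc

end Sequences

theorem trace_exists_and_formula_general (d s : ℕ) (m : ℝ) (V : ℕ → Type)
    [∀ n, Fintype (V n)] [∀ n, Nonempty (V n)]
    (G : ∀ n, SimpleGraph (V n))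
    (hdeg : ∀ n, degBound (G n) d)
    (hweak : ∀ r : ℕ, 1 ≤ r → ∀ (W : Type) [Fintype W], ∀ (P : SimpleGraph W) (p0 : W),
      ∃ L : ℝ, Filter.Tendsto (fun n => patternFreq (G n) r P p0) Filter.atTop (nhds L))
    (A : ∀ n, V n → V n → ℝ)
    (hbd : ∀ n x y, |A n x y| ≤ m)
    (hpat : ∀ k (x : V k),
      ¬ Filter.Tendsto
          (fun n => patternFreq (G n) s
            (SimpleGraph.induce (ballSet (G k) x s) (G k)) ⟨x, root_mem (G k) x s⟩)
          Filter.atTop (nhds 0) →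
      ∀ l (z : V l) (f : ballSet (G l) z s ≃ ballSet (G k) x s),
        f ⟨z, root_mem (G l) z s⟩ = ⟨x, root_mem (G k) x s⟩ →
        (∀ a b : ballSet (G l) z s,
          (G l).Adj (a : V l) (b : V l) ↔ (G k).Adj (f a : V k) (f b : V k)) →
        ∀ a : ballSet (G l) z s, A l z (a : V l) = A k x (f a : V k)) :
    ∃ L : ℝ,
      Filter.Tendsto (fun n => (∑ x : V n, A n x x) / (Fintype.card (V n) : ℝ))
        Filter.atTop (nhds L) ∧
      ∀ (I : Type) [Fintype I] (W : I → Type) [∀ i, Fintype (W i)]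
        (P : ∀ i, SimpleGraph (W i)) (y : ∀ i, W i) (p c : I → ℝ),
        (∀ n (x : V n), ∃! i : I, ballRep (G n) x s (P i) (y i)) →
        (∀ i, Filter.Tendsto (fun n => patternFreq (G n) s (P i) (y i))
          Filter.atTop (nhds (p i))) →
        (∀ i, p i ≠ 0 → ∀ n (x : V n), ballRep (G n) x s (P i) (y i) → A n x x = c i) →
        L = ∑ i : I, p i * c i := by
  have hfreq : ∀ (W : Type) [Fintype W] (P : SimpleGraph W) (y : W),
      ∃ L, Tendsto (fun n => patternFreq (G n) s P y) atTop (𝓝 L) := by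
    intro W _ P y
    rcases Nat.eq_zero_or_pos s with rfl | hs
    · exact ⟨_, tendsto_const_nhds.congr fun n => (patternFreq_radius_zero (G n) P y).symm⟩
    · exact hweak s hs W P y
  choose p hp using fun q : PatternClass ((d + 1) ^ s) => hfreq _ q.out.2.1 q.out.2.2
  have hconst : ∀ q, ∃ c, p q ≠ 0 →
      ∀ n (x : V n), ballRep (G n) x s q.out.2.1 q.out.2.2 → A n x x = c := fun q => by
    by_cases hq : p q = 0
    · exact ⟨0, fun h => (h hq).elim⟩
    · obtain ⟨c, hc⟩ := IsPatternInvariant.exists_diag_eq hpat (hp q) hq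
      exact ⟨c, fun _ => hc⟩
  choose c hc using hconst
  have hdiag : ∀ n (x : V n), |A n x x| ≤ m := fun n x => hbd n x x
  have hlim := tendsto_trace_of_patterns hdiag _ _
    (fun n x => existsUnique_patternClass_ballRep (G n) x s (ncard_ballSet_le (hdeg n) x s)) hp hc
  exact ⟨_, hlim, fun I _ W _ P y p' c' hP hp' hc' =>
    tendsto_nhds_unique hlim (tendsto_trace_of_patterns hdiag P y hP hp' hc')⟩

/-- existence of the trace of a weakly convergent operator sequence, and
the formula tr = Σ_α (lim p(α)) · f^A_α(root) over a complete system of representatives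
of ball patterns. -/
theorem trace_exists_and_formula (d s : ℕ) (m : ℝ) (V : ℕ → Type)
    [∀ n, Fintype (V n)] [∀ n, Nonempty (V n)]
    (G : ∀ n, SimpleGraph (V n))
    (hconn : ∀ n, (G n).Connected) (hdeg : ∀ n, degBound (G n) d)
    (hcardinf : Filter.Tendsto (fun n => Fintype.card (V n)) Filter.atTop Filter.atTop)
    (hweak : ∀ r : ℕ, 1 ≤ r → ∀ (W : Type) [Fintype W], ∀ (P : SimpleGraph W) (p0 : W),
      ∃ L : ℝ, Filter.Tendsto (fun n => patternFreq (G n) r P p0) Filter.atTop (nhds L))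
    (A : ∀ n, V n → V n → ℝ)
    (hbd : ∀ n x y, |A n x y| ≤ m)
    (hrange : ∀ n x y, (¬ (G n).Reachable x y ∨ s < (G n).dist x y) → A n x y = 0)
    (hpat : ∀ k (x : V k),
      ¬ Filter.Tendsto
          (fun n => patternFreq (G n) s
            (SimpleGraph.induce (ballSet (G k) x s) (G k)) ⟨x, root_mem (G k) x s⟩)
          Filter.atTop (nhds 0) →
      ∀ l (z : V l) (f : ballSet (G l) z s ≃ ballSet (G k) x s),
        f ⟨z, root_mem (G l) z s⟩ = ⟨x, root_mem (G k) x s⟩ →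
        (∀ a b : ballSet (G l) z s,
          (G l).Adj (a : V l) (b : V l) ↔ (G k).Adj (f a : V k) (f b : V k)) →
        ∀ a : ballSet (G l) z s, A l z (a : V l) = A k x (f a : V k)) :
    ∃ L : ℝ,
      Filter.Tendsto (fun n => (∑ x : V n, A n x x) / (Fintype.card (V n) : ℝ))
        Filter.atTop (nhds L) ∧
      ∀ (I : Type) [Fintype I] (W : I → Type) [∀ i, Fintype (W i)]
        (P : ∀ i, SimpleGraph (W i)) (y : ∀ i, W i) (p c : I → ℝ),
        (∀ n (x : V n), ∃! i : I, ballRep (G n) x s (P i) (y i)) →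
        (∀ i, Filter.Tendsto (fun n => patternFreq (G n) s (P i) (y i))
          Filter.atTop (nhds (p i))) →
        (∀ i, p i ≠ 0 → ∀ n (x : V n), ballRep (G n) x s (P i) (y i) → A n x x = c i) →
        L = ∑ i : I, p i * c i :=
  trace_exists_and_formula_general d s m V G hdeg hweak A hbd hpat

end GraphPaper
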